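/- Let X and Y be independent rate-1 exponential random variables and R > 0. Define g₁(y) = (2e^{2R} − e^R y − 2e^R√(e^{2R} − e^R y))/y² and g₂(y) = (2e^{2R} − e^R y + 2e^R√(e^{2R} − e^R y))/y² for y ∈ [1, e^R]. Then lim_{ρ→∞} ρ² · P( 2e^R/√(XY) − e^R/X − 1/Y ≥ ρ and e^{−2R} ≤ Y/X < 1 ) = ∫₁^{e^R} (y − 1)·( min{e^{2R}, g₂(y)} − max{1, g₁(y)} ) dy. -/

import Mathlib

/-!
The minimal power `P(x, y) = 2e^R/√(xy) − e^R/x − 1/y` is homogeneous of degree `−1` and the hybrid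
regime `e^{−2R} ≤ y/x < 1` is a cone, so the event at level `ρ` is `ρ⁻¹ • A`, where `A` is the event
at level `1`. As `(X, Y)` has density `e^{−x−y}` on the quadrant, the substitution `p = q/ρ` gives
`ρ² P((X, Y) ∈ ρ⁻¹ • A) = ∫_A e^{−(x+y)/ρ}`, which tends to the area of `A` by dominated
convergence.

To compute that area, fix `Y = b` and write `X = b t²`: the condition `P ≥ 1` becomes the quadratic
inequality `(b + 1) t² − 2e^R t + e^R ≤ 0`, whose squared roots are `g₁(b + 1)` and `g₂(b + 1)`.
Hence the slice of `A` at height `b` is an interval of length `b (min{e^{2R}, g₂} − max{1, g₁})`,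
and Cavalieri's principle with `y = b + 1` gives the integral.
-/

open MeasureTheory ProbabilityTheory Filter

/-- The function `g₁` from Lemma 5. -/
noncomputable def g1 (R y : ℝ) : ℝ :=
  (2 * Real.exp (2 * R) - Real.exp R * y -
      2 * Real.exp R * Real.sqrt (Real.exp (2 * R) - Real.exp R * y)) / y ^ 2

/-- The function `g₂` from Lemma 5. -/
noncomputable def g2 (R y : ℝ) : ℝ :=
  (2 * Real.exp (2 * R) - Real.exp R * y +
      2 * Real.exp R * Real.sqrt (Real.exp (2 * R) - Real.exp R * y)) / y ^ 2

open Set Real ENNReal Topology Module Pointwise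

namespace MeasureTheory.Measure

lemma lintegral_comp_inv_smul {E : Type*} [NormedAddCommGroup E] [NormedSpace ℝ E]
    [MeasurableSpace E] [BorelSpace E] [FiniteDimensional ℝ E] (μ : Measure E)
    [μ.IsAddHaarMeasure] {f : E → ℝ≥0∞} (hf : Measurable f) {ρ : ℝ} (hρ : 0 < ρ) :
    ∫⁻ x, f (ρ⁻¹ • x) ∂μ = ENNReal.ofReal (ρ ^ finrank ℝ E) * ∫⁻ x, f x ∂μ := by
  rw [← lintegral_map hf (measurable_const_smul _), map_addHaar_smul _ (inv_ne_zero hρ.ne'),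
    lintegral_smul_measure, inv_pow, inv_inv, abs_of_pos (by positivity), smul_eq_mul]

end MeasureTheory.Measure

namespace ProbabilityTheory

@[fun_prop]
lemma measurable_exponentialPDF (r : ℝ) : Measurable (exponentialPDF r) :=
  (measurable_exponentialPDFReal r).ennreal_ofReal

lemma exponentialPDF_le (r x : ℝ) : exponentialPDF r x ≤ ENNReal.ofReal r := by
  rw [exponentialPDF_eq]
  split_ifs with hx
  · rcases le_total r 0 with hr | hr
    · simp [ENNReal.ofReal_of_nonpos (mul_nonpos_of_nonpos_of_nonneg hr (exp_pos _).le)]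
    · exact ENNReal.ofReal_le_ofReal
        (mul_le_of_le_one_right hr (exp_le_one_iff.2 (by nlinarith)))
  · simp

lemma tendsto_exponentialPDF_inv_mul (r : ℝ) {x : ℝ} (hx : 0 ≤ x) :
    Tendsto (fun ρ : ℝ => exponentialPDF r (ρ⁻¹ * x)) atTop (𝓝 (ENNReal.ofReal r)) := by
  have hlim : Tendsto (fun ρ : ℝ => r * exp (-(r * (ρ⁻¹ * x)))) atTop (𝓝 r) := by
    simpa using ((tendsto_inv_atTop_zero.mul_const x).const_mul r).neg.rexp.const_mul r
  refine (ENNReal.tendsto_ofReal hlim).congr' ?_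
  filter_upwards [eventually_ge_atTop 0] with ρ hρ
  rw [exponentialPDF_of_nonneg (mul_nonneg (inv_nonneg.2 hρ) hx)]

lemma expMeasure_prod_eq_withDensity (r₁ r₂ : ℝ) :
    (expMeasure r₁).prod (expMeasure r₂) =
      volume.withDensity fun p : ℝ × ℝ => exponentialPDF r₁ p.1 * exponentialPDF r₂ p.2 :=
  prod_withDensity (measurable_exponentialPDF r₁) (measurable_exponentialPDF r₂)

lemma ofReal_sq_mul_expMeasure_prod_inv_smul (r₁ r₂ : ℝ) {A : Set (ℝ × ℝ)}
    (hA : MeasurableSet A) {ρ : ℝ} (hρ : 0 < ρ) :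
    ENNReal.ofReal (ρ ^ 2) * (expMeasure r₁).prod (expMeasure r₂) (ρ⁻¹ • A) =
      ∫⁻ q in A, exponentialPDF r₁ (ρ⁻¹ * q.1) * exponentialPDF r₂ (ρ⁻¹ * q.2) := by
  set D : ℝ × ℝ → ℝ≥0∞ := fun p => exponentialPDF r₁ p.1 * exponentialPDF r₂ p.2
  have hD : Measurable D := by fun_prop
  have hρA : MeasurableSet (ρ⁻¹ • A) := hA.const_smul₀ _
  have hind : (A.indicator fun q => D (ρ⁻¹ • q)) = fun q => (ρ⁻¹ • A).indicator D (ρ⁻¹ • q) := by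
    ext q
    by_cases hq : q ∈ A <;> simp [hq, smul_mem_smul_set_iff₀ (inv_ne_zero hρ.ne')]
  have hscale := Measure.lintegral_comp_inv_smul volume (hD.indicator hρA) hρ
  rw [show finrank ℝ (ℝ × ℝ) = 2 by simp] at hscale
  rw [expMeasure_prod_eq_withDensity, withDensity_apply _ hρA, ← lintegral_indicator hρA, ← hscale,
    ← hind, lintegral_indicator hA]
  rfl

theorem tendsto_sq_mul_expMeasure_prod_inv_smul (r₁ r₂ : ℝ) {A : Set (ℝ × ℝ)}
    (hA : MeasurableSet A) (hfin : volume (A ∩ Ici 0 ×ˢ Ici 0) ≠ ∞) :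
    Tendsto (fun ρ : ℝ => ENNReal.ofReal (ρ ^ 2) * (expMeasure r₁).prod (expMeasure r₂) (ρ⁻¹ • A))
      atTop (𝓝 (ENNReal.ofReal r₁ * ENNReal.ofReal r₂ * volume (A ∩ Ici 0 ×ˢ Ici 0))) := by
  set Q : Set (ℝ × ℝ) := Ici 0 ×ˢ Ici 0
  set c := ENNReal.ofReal r₁ * ENNReal.ofReal r₂
  set F : ℝ → ℝ × ℝ → ℝ≥0∞ := fun ρ q =>
    exponentialPDF r₁ (ρ⁻¹ * q.1) * exponentialPDF r₂ (ρ⁻¹ * q.2)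
  have hvanish : ∀ ρ : ℝ, 0 < ρ → ∀ q ∉ Q, F ρ q = 0 := by
    intro ρ hρ q hq
    simp only [Q, mem_prod, mem_Ici, not_and_or, not_le] at hq
    rcases hq with hq | hq <;>
      simp [F, exponentialPDF_of_neg (mul_neg_of_pos_of_neg (inv_pos.2 hρ) hq)]
  have hQ : MeasurableSet Q := measurableSet_Ici.prod measurableSet_Ici
  have hbound : ∫⁻ q in A, Q.indicator (fun _ => c) q = c * volume (A ∩ Q) := by
    rw [lintegral_indicator_const hQ, Measure.restrict_apply hQ, inter_comm]
  have hlim := tendsto_lintegral_filter_of_dominated_convergence (μ := volume.restrict A)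
    (l := atTop) (F := F) (f := Q.indicator fun _ => c) (Q.indicator fun _ => c)
    (Eventually.of_forall fun ρ => by fun_prop) ?_ (by rw [hbound]; finiteness) ?_
  · rw [hbound] at hlim
    refine hlim.congr' ?_
    filter_upwards [eventually_gt_atTop 0] with ρ hρ
    exact (ofReal_sq_mul_expMeasure_prod_inv_smul r₁ r₂ hA hρ).symm
  · filter_upwards [eventually_gt_atTop 0] with ρ hρ
    refine ae_of_all _ fun q => ?_
    by_cases hq : q ∈ Q
    · rw [indicator_of_mem hq]
      exact mul_le_mul' (exponentialPDF_le _ _) (exponentialPDF_le _ _)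
    · simp [hvanish ρ hρ q hq]
  · refine ae_of_all _ fun q => ?_
    by_cases hq : q ∈ Q
    · rw [indicator_of_mem hq]
      exact ENNReal.Tendsto.mul (tendsto_exponentialPDF_inv_mul r₁ hq.1) (Or.inr ofReal_ne_top)
        (tendsto_exponentialPDF_inv_mul r₂ hq.2) (Or.inr ofReal_ne_top)
    · rw [indicator_of_notMem hq]
      refine tendsto_const_nhds.congr' ?_
      filter_upwards [eventually_gt_atTop 0] with ρ hρ
      exact (hvanish ρ hρ q hq).symm

end ProbabilityTheory

lemma quadratic_nonpos_iff {a b c t : ℝ} (ha : 0 < a) :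
    a * t ^ 2 - 2 * b * t + c ≤ 0 ↔
      a * c ≤ b ^ 2 ∧ t ∈ Icc ((b - √(b ^ 2 - a * c)) / a) ((b + √(b ^ 2 - a * c)) / a) := by
  have hsq : a * (a * t ^ 2 - 2 * b * t + c) = (a * t - b) ^ 2 - (b ^ 2 - a * c) := by ring
  rw [mem_Icc, div_le_iff₀ ha, le_div_iff₀ ha, mul_comm t a]
  constructor
  · intro h
    have hle : (a * t - b) ^ 2 ≤ b ^ 2 - a * c := by nlinarith
    have hdisc : 0 ≤ b ^ 2 - a * c := (sq_nonneg _).trans hle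
    obtain ⟨h₁, h₂⟩ := (Real.sq_le hdisc).1 hle
    exact ⟨by linarith, by linarith, by linarith⟩
  · rintro ⟨hdisc, h₁, h₂⟩
    have hle : (a * t - b) ^ 2 ≤ b ^ 2 - a * c :=
      (Real.sq_le (by linarith)).2 ⟨by linarith, by linarith⟩
    nlinarith

lemma volume_Ioc_inter_Icc (a b c d : ℝ) :
    volume (Ioc a b ∩ Icc c d) = ENNReal.ofReal (min b d - max a c) := by
  refine le_antisymm ?_ ?_
  · rw [← Real.volume_Icc]
    exact measure_mono fun x ⟨⟨hax, hxb⟩, hcx, hxd⟩ => ⟨max_le hax.le hcx, le_min hxb hxd⟩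
  · rw [← Real.volume_Ioo]
    refine measure_mono fun x ⟨hx₁, hx₂⟩ => ?_
    rw [max_lt_iff] at hx₁
    rw [lt_min_iff] at hx₂
    exact ⟨⟨hx₁.1, hx₂.1.le⟩, hx₁.2.le, hx₂.2.le⟩

noncomputable def hybridPower (R : ℝ) (p : ℝ × ℝ) : ℝ :=
  2 * exp R / √(p.1 * p.2) - exp R / p.1 - 1 / p.2

def hybridOutageSet (R ρ : ℝ) : Set (ℝ × ℝ) :=
  {p | ρ ≤ hybridPower R p ∧ exp (-(2 * R)) ≤ p.2 / p.1 ∧ p.2 / p.1 < 1}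

lemma exp_two_mul_eq_sq (R : ℝ) : exp (2 * R) = exp R ^ 2 := by
  rw [sq, ← exp_add, two_mul]

lemma g1_eq_sq {R y : ℝ} (hy : y ≤ exp R) :
    g1 R y = ((exp R - √(exp R ^ 2 - y * exp R)) / y) ^ 2 := by
  have hd := Real.sq_sqrt (show 0 ≤ exp R ^ 2 - y * exp R by nlinarith [exp_pos R])
  rw [g1, div_pow, exp_two_mul_eq_sq, mul_comm (exp R) y]
  congr 1
  linear_combination -hd

lemma g2_eq_sq {R y : ℝ} (hy : y ≤ exp R) :
    g2 R y = ((exp R + √(exp R ^ 2 - y * exp R)) / y) ^ 2 := by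
  have hd := Real.sq_sqrt (show 0 ≤ exp R ^ 2 - y * exp R by nlinarith [exp_pos R])
  rw [g2, div_pow, exp_two_mul_eq_sq, mul_comm (exp R) y]
  congr 1
  linear_combination -hd

lemma one_le_hybridPower_iff {R a b : ℝ} (ha : 0 < a) (hb : 0 < b) :
    1 ≤ hybridPower R (a, b) ↔ (b + 1) * √(a / b) ^ 2 - 2 * exp R * √(a / b) + exp R ≤ 0 := by
  set t := √(a / b)
  have ht : 0 < t := Real.sqrt_pos.2 (div_pos ha hb)
  have hat : a = b * t ^ 2 := by rw [Real.sq_sqrt (div_pos ha hb).le]; field_simp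
  have hsqrt : √(a * b) = b * t := by
    rw [hat, show b * t ^ 2 * b = (b * t) ^ 2 by ring, Real.sqrt_sq (by positivity)]
  have hpow : hybridPower R (a, b) = (2 * exp R * t - exp R - t ^ 2) / (b * t ^ 2) := by
    simp only [hybridPower, hsqrt]
    rw [hat]
    field_simp
  rw [hpow, le_div_iff₀ (by positivity)]
  constructor <;> intro h <;> linarith

lemma one_le_hybridPower_iff_mem_Icc {R a b : ℝ} (ha : 0 < a) (hb : 0 < b) :
    1 ≤ hybridPower R (a, b) ↔
      b + 1 ≤ exp R ∧ a / b ∈ Icc (g1 R (b + 1)) (g2 R (b + 1)) := by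
  have hc := exp_pos R
  have hy_iff : (b + 1) * exp R ≤ exp R ^ 2 ↔ b + 1 ≤ exp R := by
    rw [sq]; exact mul_le_mul_iff_of_pos_right hc
  rw [one_le_hybridPower_iff ha hb, quadratic_nonpos_iff (by linarith), hy_iff]
  refine and_congr_right fun hy => ?_
  rw [g1_eq_sq hy, g2_eq_sq hy]
  set t := √(a / b)
  have hat : a / b = t ^ 2 := (Real.sq_sqrt (div_pos ha hb).le).symm
  set d := √(exp R ^ 2 - (b + 1) * exp R)
  have hd : d ≤ exp R := Real.sqrt_le_iff.2 ⟨hc.le, by nlinarith⟩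
  have ht : 0 ≤ t := Real.sqrt_nonneg _
  rw [hat, mem_Icc, mem_Icc, sq_le_sq₀ (div_nonneg (by linarith) (by linarith)) ht,
    sq_le_sq₀ ht (div_nonneg (by positivity) (by linarith))]

-- No sign condition on `p`: the junk values `x / 0 = 0` and `√x = 0` for `x < 0` scale alike.
lemma hybridPower_smul (R : ℝ) {ρ : ℝ} (hρ : 0 ≤ ρ) (p : ℝ × ℝ) :
    hybridPower R (ρ • p) = ρ⁻¹ * hybridPower R p := by
  have hsqrt : √(ρ * p.1 * (ρ * p.2)) = ρ * √(p.1 * p.2) := by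
    rw [show ρ * p.1 * (ρ * p.2) = ρ ^ 2 * (p.1 * p.2) by ring, Real.sqrt_mul (sq_nonneg ρ),
      Real.sqrt_sq hρ]
  simp only [hybridPower, Prod.smul_fst, Prod.smul_snd, smul_eq_mul, hsqrt]
  ring

lemma hybridOutageSet_eq_inv_smul (R : ℝ) {ρ : ℝ} (hρ : 0 < ρ) :
    hybridOutageSet R ρ = ρ⁻¹ • hybridOutageSet R 1 := by
  ext p
  simp only [mem_inv_smul_set_iff₀ hρ.ne', hybridOutageSet, mem_ofPred_eq,
    hybridPower_smul R hρ.le, Prod.smul_fst, Prod.smul_snd, smul_eq_mul,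
    mul_div_mul_left _ _ hρ.ne', le_inv_mul_iff₀ hρ, mul_one]

lemma measurableSet_hybridOutageSet (R ρ : ℝ) : MeasurableSet (hybridOutageSet R ρ) := by
  have hpow : Measurable (hybridPower R) := by unfold hybridPower; fun_prop
  have hratio : Measurable fun p : ℝ × ℝ => p.2 / p.1 := by fun_prop
  exact (measurableSet_le measurable_const hpow).inter
    ((measurableSet_le measurable_const hratio).inter (measurableSet_lt hratio measurable_const))

lemma div_mem_Ioc_iff {R a b : ℝ} (ha : 0 < a) (hb : 0 < b) :
    a / b ∈ Ioc 1 (exp (2 * R)) ↔ exp (-(2 * R)) ≤ b / a ∧ b / a < 1 := by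
  rw [mem_Ioc, one_lt_div hb, div_lt_one ha, div_le_iff₀ hb, le_div_iff₀ ha, exp_neg,
    inv_mul_le_iff₀ (exp_pos _), and_comm]

lemma mem_hybridOutageSet_one_iff {R a b : ℝ} (hb : 0 < b) :
    (a, b) ∈ hybridOutageSet R 1 ∧ 0 ≤ a ↔
      b + 1 ≤ exp R ∧ a / b ∈ Ioc 1 (exp (2 * R)) ∩ Icc (g1 R (b + 1)) (g2 R (b + 1)) := by
  constructor
  · rintro ⟨⟨hpow, hratio⟩, ha⟩
    have ha : 0 < a := ha.lt_of_ne <| by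
      rintro rfl
      simpa [(exp_pos _).not_ge] using hratio.1
    obtain ⟨hy, hI⟩ := (one_le_hybridPower_iff_mem_Icc ha hb).1 hpow
    exact ⟨hy, (div_mem_Ioc_iff ha hb).2 hratio, hI⟩
  · rintro ⟨hy, hJ, hI⟩
    have ha : 0 < a := hb.trans ((one_lt_div hb).1 hJ.1)
    exact ⟨⟨(one_le_hybridPower_iff_mem_Icc ha hb).2 ⟨hy, hI⟩, (div_mem_Ioc_iff ha hb).1 hJ⟩, ha.le⟩

noncomputable def outageIntegrand (R y : ℝ) : ℝ :=
  (y - 1) * (min (exp (2 * R)) (g2 R y) - max 1 (g1 R y))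

lemma volume_slice_hybridOutageSet (R b : ℝ) :
    volume ((fun a => (a, b)) ⁻¹' (hybridOutageSet R 1 ∩ Ici 0 ×ˢ Ici 0)) =
      (Ioc 1 (exp R)).indicator (fun y => ENNReal.ofReal (outageIntegrand R y)) (b + 1) := by
  have hslice : (fun a => (a, b)) ⁻¹' (hybridOutageSet R 1 ∩ Ici 0 ×ˢ Ici 0) =
      {a | (a, b) ∈ hybridOutageSet R 1 ∧ 0 ≤ a ∧ 0 ≤ b} := rfl
  by_cases hb : 0 < b
  · simp only [hslice, hb.le, and_true, mem_hybridOutageSet_one_iff hb]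
    set J := Ioc 1 (exp (2 * R)) ∩ Icc (g1 R (b + 1)) (g2 R (b + 1))
    by_cases hy : b + 1 ≤ exp R
    · have hpre : {a | b + 1 ≤ exp R ∧ a / b ∈ J} = (· * b⁻¹) ⁻¹' J := by
        ext a; simp [hy, div_eq_mul_inv]
      have hy' : b + 1 ∈ Ioc 1 (exp R) := ⟨by linarith, hy⟩
      rw [hpre, Real.volume_preimage_mul_right (inv_ne_zero hb.ne'), volume_Ioc_inter_Icc,
        indicator_of_mem hy', inv_inv, abs_of_pos hb, ← ENNReal.ofReal_mul hb.le, outageIntegrand,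
        add_sub_cancel_right]
    · simp [hy]
  · have hempty : (fun a => (a, b)) ⁻¹' (hybridOutageSet R 1 ∩ Ici 0 ×ˢ Ici 0) = ∅ := by
      refine eq_empty_of_forall_notMem fun a ha => ?_
      obtain ⟨⟨_, hratio, _⟩, _, hb0⟩ := ha
      obtain rfl : b = 0 := le_antisymm (not_lt.1 hb) hb0
      simp [(exp_pos _).not_ge] at hratio
    rw [hempty, measure_empty, indicator_of_notMem (fun h => hb (by linarith [h.1]))]

lemma outageIntegrand_nonneg {R y : ℝ} (hy : y ∈ Icc 1 (exp R)) : 0 ≤ outageIntegrand R y := by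
  obtain ⟨hy1, hyc⟩ := hy
  have hc := exp_pos R
  rw [outageIntegrand, g1_eq_sq hyc, g2_eq_sq hyc, exp_two_mul_eq_sq]
  set d := √(exp R ^ 2 - y * exp R)
  have hd : d ≤ exp R := Real.sqrt_le_iff.2 ⟨hc.le, by nlinarith⟩
  have hd0 : 0 ≤ d := Real.sqrt_nonneg _
  have hlo : 0 ≤ (exp R - d) / y := div_nonneg (by linarith) (by linarith)
  have hlo_le : (exp R - d) / y ≤ exp R := (div_le_iff₀ (by linarith)).2 (by nlinarith)
  have hlo_le_hi : (exp R - d) / y ≤ (exp R + d) / y :=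
    div_le_div_of_nonneg_right (by linarith) (by linarith)
  have hhi : 1 ≤ (exp R + d) / y := (one_le_div (by linarith)).2 (by linarith)
  refine mul_nonneg (by linarith) (sub_nonneg.2 (max_le (le_min ?_ ?_) (le_min ?_ ?_)))
  · exact one_le_pow₀ (by linarith)
  · exact one_le_pow₀ hhi
  · exact pow_le_pow_left₀ hlo hlo_le 2
  · exact pow_le_pow_left₀ hlo hlo_le_hi 2

lemma continuousOn_outageIntegrand (R : ℝ) : ContinuousOn (outageIntegrand R) (Ioi 0) := by
  unfold outageIntegrand g1 g2
  fun_prop (disch := intro y hy; exact pow_ne_zero 2 (ne_of_gt hy))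

lemma volume_hybridOutageSet_inter {R : ℝ} (hR : 0 ≤ R) :
    volume (hybridOutageSet R 1 ∩ Ici 0 ×ˢ Ici 0) =
      ENNReal.ofReal (∫ y in (1 : ℝ)..exp R, outageIntegrand R y) := by
  have hmeas : MeasurableSet (hybridOutageSet R 1 ∩ Ici 0 ×ˢ Ici 0) :=
    (measurableSet_hybridOutageSet R 1).inter (measurableSet_Ici.prod measurableSet_Ici)
  have hint : IntegrableOn (outageIntegrand R) (Icc 1 (exp R)) :=
    ((continuousOn_outageIntegrand R).mono fun y hy => zero_lt_one.trans_le hy.1).integrableOn_Icc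
  rw [Measure.volume_eq_prod, Measure.prod_apply_symm hmeas]
  simp_rw [volume_slice_hybridOutageSet]
  rw [lintegral_add_right_eq_self (fun y => (Ioc 1 (exp R)).indicator _ y) 1,
    lintegral_indicator measurableSet_Ioc, intervalIntegral.integral_of_le (one_le_exp hR),
    ofReal_integral_eq_lintegral_ofReal (hint.mono_set Ioc_subset_Icc_self)]
  filter_upwards [ae_restrict_mem measurableSet_Ioc] with y hy
  exact outageIntegrand_nonneg (Ioc_subset_Icc_self hy)

theorem stmt_12_general {Ω : Type*} [MeasurableSpace Ω] (μ : Measure Ω)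
    (X Y : Ω → ℝ) (hX : Measurable X) (hY : Measurable Y) (hXY : IndepFun X Y μ)
    (hXd : μ.map X = expMeasure 1) (hYd : μ.map Y = expMeasure 1)
    (R : ℝ) (hR : 0 < R) :
    Tendsto (fun ρ : ℝ => ρ ^ 2 *
        (μ {ω | ρ ≤ 2 * Real.exp R / Real.sqrt (X ω * Y ω) - Real.exp R / X ω - 1 / Y ω ∧
                Real.exp (-(2 * R)) ≤ Y ω / X ω ∧ Y ω / X ω < 1}).toReal)
      atTop
      (nhds (∫ y in (1 : ℝ)..Real.exp R,
        (y - 1) * (min (Real.exp (2 * R)) (g2 R y) - max 1 (g1 R y)))) := by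
  have := isProbabilityMeasure_expMeasure one_pos
  have hlaw : μ.map (fun ω => (X ω, Y ω)) = (expMeasure 1).prod (expMeasure 1) := by
    rw [(indepFun_iff_map_prod_eq_prod_map_map' hX.aemeasurable hY.aemeasurable
      (by rw [hXd]; infer_instance) (by rw [hYd]; infer_instance)).1 hXY, hXd, hYd]
  have hprob : ∀ ρ, μ ((fun ω => (X ω, Y ω)) ⁻¹' hybridOutageSet R ρ) =
      (expMeasure 1).prod (expMeasure 1) (hybridOutageSet R ρ) := fun ρ => by
    rw [← hlaw, Measure.map_apply (hX.prodMk hY) (measurableSet_hybridOutageSet R ρ)]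
  have hlim := tendsto_sq_mul_expMeasure_prod_inv_smul 1 1 (measurableSet_hybridOutageSet R 1)
    (by rw [volume_hybridOutageSet_inter hR.le]; exact ENNReal.ofReal_ne_top)
  have hI : 0 ≤ ∫ y in (1 : ℝ)..exp R, outageIntegrand R y :=
    intervalIntegral.integral_nonneg (one_le_exp hR.le) fun y hy => outageIntegrand_nonneg hy
  rw [volume_hybridOutageSet_inter hR.le, ENNReal.ofReal_one, one_mul, one_mul] at hlim
  have hlim' := (ENNReal.tendsto_toReal ENNReal.ofReal_ne_top).comp hlim
  rw [ENNReal.toReal_ofReal hI] at hlim'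
  refine hlim'.congr' ?_
  filter_upwards [eventually_gt_atTop 0] with ρ hρ
  rw [Function.comp_apply, ENNReal.toReal_mul, ENNReal.toReal_ofReal (sq_nonneg ρ),
    ← hybridOutageSet_eq_inv_smul R hρ, ← hprob]
  rfl

/-- High-SNR behavior of the hybrid-NOMA power outage probability: if `X = h_{2,1}` and
`Y = h_{2,2}` are i.i.d. rate-1 exponential channel gains, then
`ρ² · P(2e^R/√(XY) - e^R/X - 1/Y ≥ ρ, e^{-2R} ≤ Y/X < 1)` converges, as `ρ → ∞`, to
`∫₁^{e^R} (y - 1)(min{e^{2R}, g₂(y)} - max{1, g₁(y)}) dy`. -/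
theorem stmt_12 {Ω : Type*} [MeasurableSpace Ω] (μ : Measure Ω) [IsProbabilityMeasure μ]
    (X Y : Ω → ℝ) (hX : Measurable X) (hY : Measurable Y) (hXY : IndepFun X Y μ)
    (hXd : μ.map X = expMeasure 1) (hYd : μ.map Y = expMeasure 1)
    (R : ℝ) (hR : 0 < R) :
    Tendsto (fun ρ : ℝ => ρ ^ 2 *
        (μ {ω | ρ ≤ 2 * Real.exp R / Real.sqrt (X ω * Y ω) - Real.exp R / X ω - 1 / Y ω ∧
                Real.exp (-(2 * R)) ≤ Y ω / X ω ∧ Y ω / X ω < 1}).toReal)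
      atTop
      (nhds (∫ y in (1 : ℝ)..Real.exp R,
        (y - 1) * (min (Real.exp (2 * R)) (g2 R y) - max 1 (g1 R y)))) :=
  stmt_12_general μ X Y hX hY hXY hXd hYd R hR
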